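/- arXiv:1803.03600 — 6 statements merged into one kernel-verified Lean document; each statement's English description precedes it below -/
import Mathlib

section
/- (Sterbenz's Lemma) If a and b are floating point numbers with radix 2 and t digits of mantissa, a ≥ 0, and a/2 ≤ b ≤ 2a, then a − b is exactly representable, i.e. a − b ∈ F_{2,t}. -/
/-- Floating point numbers with radix `β` and `t` digits of mantissa. -/
def Fset (β t : ℕ) : Set ℝ :=
  {0} ∪ {x | ∃ m e : ℤ, x = (m : ℝ) * (β : ℝ) ^ e ∧ (β : ℤ) ^ t ≤ |m| ∧ |m| < (β : ℤ) ^ (t + 1)}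

/-- Any nonzero `m * 2^e` with `|m| < 2^(t+1)` can be renormalized into `Fset 2 t`. -/
lemma aux_mem (t : ℕ) (m e : ℤ) (hm : m ≠ 0) (hlt : |m| < 2 ^ (t + 1)) :
    (m : ℝ) * (2 : ℝ) ^ e ∈ Fset 2 t := by
  set n := m.natAbs with hn
  have hn0 : 0 < n := Int.natAbs_pos.mpr hm
  set j := Nat.log 2 n with hj
  have h1 : 2 ^ j ≤ n := Nat.pow_log_le_self 2 hn0.ne'
  have h2 : n < 2 ^ (j + 1) := Nat.lt_pow_succ_log_self (by norm_num) n
  have habs : |m| = (n : ℤ) := by rw [hn, Int.abs_eq_natAbs]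
  have hnlt : n < 2 ^ (t + 1) := by
    rw [habs] at hlt; exact_mod_cast hlt
  have hjt : j ≤ t := by
    by_contra h
    push_neg at h
    have : (2 : ℕ) ^ (t + 1) ≤ 2 ^ j := Nat.pow_le_pow_right (by norm_num) h
    omega
  refine Or.inr ⟨m * 2 ^ (t - j), e - (t - j : ℕ), ?_, ?_, ?_⟩
  · push_cast
    rw [zpow_sub₀ (by norm_num : (2:ℝ) ≠ 0), zpow_natCast]
    field_simp
  · rw [abs_mul, habs, abs_pow]
    have key : (2 : ℤ) ^ t ≤ (n : ℤ) * 2 ^ (t - j) := by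
      have : (2 : ℕ) ^ t ≤ n * 2 ^ (t - j) := by
        calc (2:ℕ) ^ t = 2 ^ j * 2 ^ (t - j) := by rw [← pow_add]; congr 1; omega
        _ ≤ n * 2 ^ (t - j) := Nat.mul_le_mul_right _ h1
      exact_mod_cast this
    simpa using key
  · rw [abs_mul, habs, abs_pow]
    have key : (n : ℤ) * 2 ^ (t - j) < 2 ^ (t + 1) := by
      have : n * 2 ^ (t - j) < (2 : ℕ) ^ (t + 1) := by
        calc n * 2 ^ (t - j) < 2 ^ (j + 1) * 2 ^ (t - j) := by
              exact Nat.mul_lt_mul_of_lt_of_le h2 le_rfl (by positivity)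
        _ = 2 ^ (t + 1) := by rw [← pow_add]; congr 1; omega
      exact_mod_cast this
    simpa using key

/-- Sterbenz's Lemma: if `a, b ∈ F_{2,t}`, `a ≥ 0` and `a/2 ≤ b ≤ 2a`, then
`a - b` is exactly representable. -/
theorem sterbenz (t : ℕ) (a b : ℝ) (ha : a ∈ Fset 2 t) (hb : b ∈ Fset 2 t)
    (ha0 : 0 ≤ a) (h1 : a / 2 ≤ b) (h2 : b ≤ 2 * a) : a - b ∈ Fset 2 t := by
  rcases ha with ha | ⟨ma, ea, hae, hma1, hma2⟩
  · -- a = 0, hence b = 0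
    simp only [Set.mem_singleton_iff] at ha
    subst ha
    have hb0 : b = 0 := le_antisymm (by linarith) (by linarith)
    subst hb0
    exact Or.inl (by norm_num)
  rcases hb with hb | ⟨mb, eb, hbe, hmb1, hmb2⟩
  · -- b = 0, hence a = 0
    simp only [Set.mem_singleton_iff] at hb
    subst hb
    have ha' : a = 0 := le_antisymm (by linarith) ha0
    rw [ha']
    exact Or.inl (by norm_num)
  -- both nonzero
  simp only [Nat.cast_ofNat] at hae hbe hma1 hma2 hmb1 hmb2
  have hma0 : ma ≠ 0 := by
    intro h
    rw [h] at hma1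
    simp at hma1
    have : (0:ℤ) < 2 ^ t := by positivity
    linarith
  have hea_pos : (0:ℝ) < (2:ℝ) ^ ea := by positivity
  have heb_pos : (0:ℝ) < (2:ℝ) ^ eb := by positivity
  have hane : a ≠ 0 := by
    rw [hae]
    exact mul_ne_zero (by exact_mod_cast hma0) (ne_of_gt hea_pos)
  have hapos : 0 < a := lt_of_le_of_ne ha0 (Ne.symm hane)
  have hbpos : 0 < b := by linarith
  have habsle : |a - b| ≤ min a b := by
    rw [abs_sub_le_iff]
    constructor <;> simp only [le_min_iff] <;> exact ⟨by linarith, by linarith⟩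
  rcases le_total eb ea with hle | hle
  · -- common exponent eb
    set d : ℕ := (ea - eb).toNat with hd
    have hd' : ea = eb + (d : ℤ) := by rw [hd]; omega
    set M : ℤ := ma * 2 ^ d - mb with hM
    have hab : a - b = (M : ℝ) * (2:ℝ) ^ eb := by
      rw [hae, hbe, hd', hM]
      push_cast
      rw [zpow_add₀ (by norm_num : (2:ℝ) ≠ 0), zpow_natCast]
      ring
    rcases eq_or_ne M 0 with hM0 | hM0
    · rw [hab, hM0]; exact Or.inl (by norm_num)
    · rw [hab]
      apply aux_mem t M eb hM0
      have h1' : |(M:ℝ)| * (2:ℝ)^eb ≤ (mb:ℝ) * (2:ℝ)^eb := by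
        have key : |(M:ℝ) * (2:ℝ)^eb| ≤ (mb:ℝ) * (2:ℝ)^eb := by
          rw [← hab]
          calc |a - b| ≤ min a b := habsle
            _ ≤ b := min_le_right _ _
            _ = _ := hbe
        rwa [abs_mul, abs_of_pos heb_pos] at key
      have h2' : |(M:ℝ)| ≤ (mb:ℝ) := le_of_mul_le_mul_right h1' heb_pos
      have h3' : |M| ≤ mb := by exact_mod_cast h2'
      calc |M| ≤ mb := h3'
        _ ≤ |mb| := le_abs_self mb
        _ < 2 ^ (t + 1) := hmb2
  · -- common exponent ea
    set d : ℕ := (eb - ea).toNat with hd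
    have hd' : eb = ea + (d : ℤ) := by rw [hd]; omega
    set M : ℤ := ma - mb * 2 ^ d with hM
    have hab : a - b = (M : ℝ) * (2:ℝ) ^ ea := by
      rw [hae, hbe, hd', hM]
      push_cast
      rw [zpow_add₀ (by norm_num : (2:ℝ) ≠ 0), zpow_natCast]
      ring
    rcases eq_or_ne M 0 with hM0 | hM0
    · rw [hab, hM0]; exact Or.inl (by norm_num)
    · rw [hab]
      apply aux_mem t M ea hM0
      have h1' : |(M:ℝ)| * (2:ℝ)^ea ≤ (ma:ℝ) * (2:ℝ)^ea := by
        have key : |(M:ℝ) * (2:ℝ)^ea| ≤ (ma:ℝ) * (2:ℝ)^ea := by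
          rw [← hab]
          calc |a - b| ≤ min a b := habsle
            _ ≤ a := min_le_left _ _
            _ = _ := hae
        rwa [abs_mul, abs_of_pos hea_pos] at key
      have h2' : |(M:ℝ)| ≤ (ma:ℝ) := le_of_mul_le_mul_right h1' hea_pos
      have h3' : |M| ≤ ma := by exact_mod_cast h2'
      calc |M| ≤ ma := h3'
        _ ≤ |ma| := le_abs_self ma
        _ < 2 ^ (t + 1) := hma2
end

section
/- (Sign-correct three-term comparison) Assume radix 2. Let a, b, c ∈ F_ε be strictly positive with b ≥ c. Let d = fl_ε(a−b) and e = fl_ε(d−c). Then sign(e) = sign(a − b − c). -/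
/-!
If `y/2 ≤ x ≤ 2y`, Sterbenz's lemma makes `x - y` exact. Otherwise `x` and `y` are far
apart, and monotonicity of rounding against the float `x/2` or `-(y/2)` keeps `fl (x - y)`
strictly on the correct side of zero. Applying this first to `fl (a - b)` and then to
`fl (d - c)` gives the theorem; in the first step `c ≤ b` keeps the subtraction of `c`
from crossing zero.
-/

section RoundToNearest

variable {F : Set ℝ} {fl : ℝ → ℝ}

theorem le_fl_of_le (hfix : ∀ x ∈ F, fl x = x) (hmono : ∀ x y : ℝ, x ≤ y → fl x ≤ fl y)
    {x y : ℝ} (hx : x ∈ F) (h : x ≤ y) : x ≤ fl y :=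
  hfix x hx ▸ hmono x y h

theorem fl_le_of_le (hfix : ∀ x ∈ F, fl x = x) (hmono : ∀ x y : ℝ, x ≤ y → fl x ≤ fl y)
    {x y : ℝ} (hy : y ∈ F) (h : x ≤ y) : fl x ≤ y :=
  hfix y hy ▸ hmono x y h

theorem neg_half_mem
    (hSterbenz : ∀ a ∈ F, ∀ b ∈ F, 0 ≤ a → a / 2 ≤ b → b ≤ 2 * a → a - b ∈ F)
    (hhalf : ∀ a ∈ F, a / 2 ∈ F) {x : ℝ} (hx : x ∈ F) (hx0 : 0 ≤ x) : -(x / 2) ∈ F := by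
  have h := hSterbenz (x / 2) (hhalf x hx) x hx (by linarith) (by linarith) (by linarith)
  rwa [show x / 2 - x = -(x / 2) by ring] at h

theorem fl_sub_le_neg_half (hfix : ∀ x ∈ F, fl x = x)
    (hmono : ∀ x y : ℝ, x ≤ y → fl x ≤ fl y)
    (hSterbenz : ∀ a ∈ F, ∀ b ∈ F, 0 ≤ a → a / 2 ≤ b → b ≤ 2 * a → a - b ∈ F)
    (hhalf : ∀ a ∈ F, a / 2 ∈ F) {x y : ℝ} (hy : y ∈ F) (hy0 : 0 ≤ y) (hxy : x ≤ y / 2) :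
    fl (x - y) ≤ -(y / 2) :=
  fl_le_of_le hfix hmono (neg_half_mem hSterbenz hhalf hy hy0) (by linarith)

theorem half_le_fl_sub (hfix : ∀ x ∈ F, fl x = x) (hmono : ∀ x y : ℝ, x ≤ y → fl x ≤ fl y)
    (hhalf : ∀ a ∈ F, a / 2 ∈ F) {x y : ℝ} (hx : x ∈ F) (hyx : y ≤ x / 2) :
    x / 2 ≤ fl (x - y) :=
  le_fl_of_le hfix hmono (hhalf x hx) (by linarith)

theorem sign_fl_sub (hfix : ∀ x ∈ F, fl x = x) (hmono : ∀ x y : ℝ, x ≤ y → fl x ≤ fl y)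
    (hSterbenz : ∀ a ∈ F, ∀ b ∈ F, 0 ≤ a → a / 2 ≤ b → b ≤ 2 * a → a - b ∈ F)
    (hhalf : ∀ a ∈ F, a / 2 ∈ F) {x y : ℝ} (hx : x ∈ F) (hy : y ∈ F) (hy0 : 0 < y) :
    Real.sign (fl (x - y)) = Real.sign (x - y) := by
  by_cases hsmall : x < y / 2
  · have hfl := fl_sub_le_neg_half hfix hmono hSterbenz hhalf hy hy0.le hsmall.le
    rw [Real.sign_of_neg (by linarith), Real.sign_of_neg (by linarith)]
  by_cases hlarge : 2 * y < x
  · have hfl := half_le_fl_sub hfix hmono hhalf hx (y := y) (by linarith)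
    rw [Real.sign_of_pos (by linarith), Real.sign_of_pos (by linarith)]
  rw [hfix _ (hSterbenz x hx y hy (by linarith) (by linarith) (by linarith))]

theorem sign_fl_sub_sub (hfix : ∀ x ∈ F, fl x = x) (hmono : ∀ x y : ℝ, x ≤ y → fl x ≤ fl y)
    (hSterbenz : ∀ a ∈ F, ∀ b ∈ F, 0 ≤ a → a / 2 ≤ b → b ≤ 2 * a → a - b ∈ F)
    (hhalf : ∀ a ∈ F, a / 2 ∈ F) {a b c : ℝ} (ha : a ∈ F) (hb : b ∈ F) (ha0 : 0 ≤ a)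
    (hc0 : 0 ≤ c) (hcb : c ≤ b) :
    Real.sign (fl (a - b) - c) = Real.sign (a - b - c) := by
  by_cases hsmall : a < b / 2
  · have hfl := fl_sub_le_neg_half hfix hmono hSterbenz hhalf hb (hc0.trans hcb) hsmall.le
    rw [Real.sign_of_neg (by linarith), Real.sign_of_neg (by linarith)]
  by_cases hlarge : 2 * b < a
  · have hfl := half_le_fl_sub hfix hmono hhalf ha (y := b) (by linarith)
    rw [Real.sign_of_pos (by linarith), Real.sign_of_pos (by linarith)]
  rw [hfix _ (hSterbenz a ha b hb ha0 (by linarith) (by linarith))]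

end RoundToNearest

theorem sign_correct_comparison_general (F : Set ℝ) (fl : ℝ → ℝ)
    (hmem : ∀ x, fl x ∈ F) (hfix : ∀ x ∈ F, fl x = x)
    (hmono : ∀ x y : ℝ, x ≤ y → fl x ≤ fl y)
    (hSterbenz : ∀ a ∈ F, ∀ b ∈ F, 0 ≤ a → a / 2 ≤ b → b ≤ 2 * a → a - b ∈ F)
    (hhalf : ∀ a ∈ F, a / 2 ∈ F)
    (a b c d e : ℝ) (ha : a ∈ F) (hb : b ∈ F) (hc : c ∈ F)
    (ha0 : 0 < a) (hc0 : 0 < c) (hbc : c ≤ b)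
    (hd : d = fl (a - b)) (he : e = fl (d - c)) :
    Real.sign e = Real.sign (a - b - c) := by
  rw [he, sign_fl_sub hfix hmono hSterbenz hhalf (hd ▸ hmem _) hc hc0, hd,
    sign_fl_sub_sub hfix hmono hSterbenz hhalf ha hb ha0.le hc0.le hbc]

/-- Sign-correct three-term comparison: for strictly positive radix-2 floats
`a, b, c` with `b ≥ c`, setting `d = fl(a−b)` and `e = fl(d−c)`, the sign of `e`
equals the sign of `a − b − c`. -/
theorem sign_correct_comparison (F : Set ℝ) (fl : ℝ → ℝ)
    (hmem : ∀ x, fl x ∈ F) (hfix : ∀ x ∈ F, fl x = x)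
    (hmono : ∀ x y : ℝ, x ≤ y → fl x ≤ fl y)
    (hSterbenz : ∀ a ∈ F, ∀ b ∈ F, 0 ≤ a → a / 2 ≤ b → b ≤ 2 * a → a - b ∈ F)
    (hhalf : ∀ a ∈ F, a / 2 ∈ F)
    (a b c d e : ℝ) (ha : a ∈ F) (hb : b ∈ F) (hc : c ∈ F)
    (ha0 : 0 < a) (hb0 : 0 < b) (hc0 : 0 < c) (hbc : c ≤ b)
    (hd : d = fl (a - b)) (he : e = fl (d - c)) :
    Real.sign e = Real.sign (a - b - c) :=
  sign_correct_comparison_general F fl hmem hfix hmono hSterbenz hhalf a b c d e ha hb hc ha0 hc0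
    hbc hd he
end

section
/- Let C be the middle-thirds Cantor set and let T be the tent map, T(x) = 3x for x ≤ 1/2 and T(x) = 3 − 3x otherwise. Define C₀ = [0,1] and C_k = T⁻¹(C_{k−1}). Then for every x ∈ C_{k−1} \ C_k, the distance from x to C satisfies d(x, C) ≤ 3^{−k}/2. -/
/-- The tent map. -/
noncomputable def tent (x : ℝ) : ℝ := if x ≤ 1 / 2 then 3 * x else 3 - 3 * x

/-- The middle-thirds Cantor set. -/
def cantorMiddleThirds : Set ℝ :=
  {x | ∃ a : ℕ → ℝ, (∀ k, a k = 0 ∨ a k = 1) ∧ x = ∑' k : ℕ, 2 * a k / 3 ^ (k + 1)}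

/-- `C₀ = [0,1]`, `C_k = T⁻¹(C_{k−1})`. -/
def Ck : ℕ → Set ℝ
  | 0 => Set.Icc 0 1
  | k + 1 => tent ⁻¹' Ck k

lemma summable_cantor (a : ℕ → ℝ) (ha : ∀ k, a k = 0 ∨ a k = 1) :
    Summable (fun k : ℕ => 2 * a k / 3 ^ (k + 1)) := by
  refine Summable.of_nonneg_of_le (fun k => ?_) (fun k => ?_)
    ((summable_geometric_of_lt_one (by norm_num) (by norm_num : (1/3:ℝ) < 1)).mul_left 2)
  · rcases ha k with h | h <;> simp [h] <;> positivity
  · rcases ha k with h | h <;> simp [h]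
    have hi : ((3:ℝ)^(k+1))⁻¹ ≤ ((3:ℝ)^k)⁻¹ :=
      inv_anti₀ (by positivity) (pow_le_pow_right₀ (by norm_num) (Nat.le_succ k))
    rw [div_eq_mul_inv]
    linarith

lemma cantorGeomSum : ∑' k : ℕ, 2 * (1:ℝ) / 3 ^ (k + 1) = 1 := by
  have h : (fun k : ℕ => 2 * (1:ℝ) / 3 ^ (k + 1)) = fun k : ℕ => (2/3) * (1/3 : ℝ) ^ k := by
    funext k
    rw [pow_succ]
    field_simp
    rw [← mul_pow]; norm_num
  rw [h, tsum_mul_left, tsum_geometric_of_lt_one (by norm_num) (by norm_num)]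
  norm_num

lemma one_mem : (1:ℝ) ∈ cantorMiddleThirds :=
  ⟨fun _ => 1, fun _ => Or.inr rfl, cantorGeomSum.symm⟩

lemma third_mem_of_mem {y : ℝ} (hy : y ∈ cantorMiddleThirds) : y / 3 ∈ cantorMiddleThirds := by
  obtain ⟨a, ha, rfl⟩ := hy
  refine ⟨fun k => if k = 0 then 0 else a (k - 1), fun k => ?_, ?_⟩
  · cases k with
    | zero => exact Or.inl (by simp)
    | succ n => simpa using ha n
  · have hs : Summable (fun k : ℕ => 2 * (if k = 0 then (0:ℝ) else a (k-1)) / 3 ^ (k + 1)) :=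
      summable_cantor _ (fun k => by
        cases k with
        | zero => exact Or.inl (by simp)
        | succ n => simpa using ha n)
    rw [Summable.tsum_eq_zero_add hs]
    have h0 : 2 * (if (0:ℕ) = 0 then (0:ℝ) else a (0-1)) / 3 ^ (0 + 1) = 0 := by norm_num
    have h2 : ∀ k : ℕ, 2 * (if k + 1 = 0 then (0:ℝ) else a (k+1-1)) / 3 ^ (k + 1 + 1)
        = (2 * a k / 3 ^ (k+1)) / 3 := by
      intro k
      rw [if_neg (Nat.succ_ne_zero k)]
      simp only [Nat.add_sub_cancel]
      rw [pow_succ]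
      ring
    rw [h0, zero_add, tsum_congr h2, tsum_div_const]

lemma one_sub_mem {y : ℝ} (hy : y ∈ cantorMiddleThirds) : 1 - y ∈ cantorMiddleThirds := by
  obtain ⟨a, ha, rfl⟩ := hy
  refine ⟨fun k => 1 - a k, fun k => ?_, ?_⟩
  · rcases ha k with h | h <;> simp [h]
  · have h1 : (fun k : ℕ => 2 * (1 - a k) / 3 ^ (k + 1))
        = fun k : ℕ => 2 * (1:ℝ) / 3 ^ (k + 1) - 2 * a k / 3 ^ (k + 1) := by
      funext k; ring
    rw [h1, Summable.tsum_sub (summable_cantor _ (fun _ => Or.inr rfl)) (summable_cantor a ha),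
      cantorGeomSum]

lemma cantor_nonempty : cantorMiddleThirds.Nonempty := ⟨1, one_mem⟩

lemma third_mem : (1/3 : ℝ) ∈ cantorMiddleThirds := by
  have := third_mem_of_mem one_mem
  simpa using this

lemma two_thirds_mem : (2/3 : ℝ) ∈ cantorMiddleThirds := by
  have := one_sub_mem third_mem
  norm_num at this
  exact this

lemma key_scaling (x : ℝ) :
    Metric.infDist x cantorMiddleThirds ≤ Metric.infDist (tent x) cantorMiddleThirds / 3 := by
  refine le_of_forall_pos_le_add fun ε hε => ?_
  obtain ⟨y, hyC, hy⟩ := (Metric.infDist_lt_iff cantor_nonempty).mp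
    (show Metric.infDist (tent x) cantorMiddleThirds
        < Metric.infDist (tent x) cantorMiddleThirds + 3 * ε by linarith)
  by_cases h2 : x ≤ 1/2
  · have hm := Metric.infDist_le_dist_of_mem (x := x) (third_mem_of_mem hyC)
    have hd : dist x (y/3) = dist (tent x) y / 3 := by
      simp only [tent, if_pos h2, Real.dist_eq]
      rw [show x - y/3 = (3*x - y)/3 by ring, abs_div]
      norm_num
    rw [hd] at hm
    linarith
  · have hm := Metric.infDist_le_dist_of_mem (x := x) (one_sub_mem (third_mem_of_mem hyC))
    have hd : dist x (1 - y/3) = dist (tent x) y / 3 := by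
      simp only [tent, if_neg h2, Real.dist_eq]
      rw [show x - (1 - y/3) = -((3 - 3*x) - y)/3 by ring, abs_div, abs_neg]
      norm_num
    rw [hd] at hm
    linarith

/-- For `x ∈ C_{k-1} \ C_k` (here written with index `k+1`), the distance from
`x` to the Cantor set is at most `3^{-(k+1)}/2`. -/
theorem cantor_dist_bound (k : ℕ) (x : ℝ) (hx : x ∈ Ck k \ Ck (k + 1)) :
    Metric.infDist x cantorMiddleThirds ≤ (3 : ℝ) ^ (-(k : ℤ) - 1) / 2 := by
  induction k generalizing x with
  | zero =>
    obtain ⟨hx0, hx1⟩ := hx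
    have hx0' : x ∈ Set.Icc (0:ℝ) 1 := hx0
    have hval : ((3:ℝ) ^ (-((0:ℕ):ℤ) - 1)) / 2 = 1/6 := by norm_num
    rw [hval]
    by_cases h2 : x ≤ 1/2
    · have h13 : 1/3 < x := by
        by_contra h
        push_neg at h
        exact hx1 (show tent x ∈ Set.Icc (0:ℝ) 1 by
          simp only [tent, if_pos h2, Set.mem_Icc]
          constructor <;> linarith [hx0'.1])
      have := Metric.infDist_le_dist_of_mem (x := x) third_mem
      rw [Real.dist_eq, abs_of_pos (by linarith)] at this
      linarith
    · push_neg at h2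
      have h23 : x < 2/3 := by
        by_contra h
        push_neg at h
        exact hx1 (show tent x ∈ Set.Icc (0:ℝ) 1 by
          simp only [tent, if_neg (not_le.mpr h2), Set.mem_Icc]
          constructor <;> linarith [hx0'.2])
      have := Metric.infDist_le_dist_of_mem (x := x) two_thirds_mem
      rw [Real.dist_eq, abs_of_neg (by linarith)] at this
      linarith
  | succ k ih =>
    have hx' : tent x ∈ Ck k \ Ck (k + 1) := ⟨hx.1, hx.2⟩
    have h1 := ih (tent x) hx'
    have h2 := key_scaling x
    have h3 : Metric.infDist x cantorMiddleThirds ≤ ((3:ℝ) ^ (-(k:ℤ) - 1) / 2) / 3 := by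
      linarith
    have h4 : ((3:ℝ) ^ (-(k:ℤ) - 1) / 2) / 3 = (3:ℝ) ^ (-((k+1 : ℕ):ℤ) - 1) / 2 := by
      rw [show (-((k+1:ℕ):ℤ) - 1) = (-(k:ℤ) - 1) + (-1) by push_cast; ring,
        zpow_add₀ (by norm_num : (3:ℝ) ≠ 0), zpow_neg_one]
      ring
    rw [h4] at h3
    exact h3
end

section
/- The middle-thirds Cantor set equals the set of points all of whose forward iterates under the tent map remain in [0,1]: C = {x ∈ ℝ : ∀k ≥ 0, T^k(x) ∈ [0,1]}, where T(x) = 3x for x ≤ 1/2 and T(x) = 3 − 3x otherwise. -/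
private lemma digit_nonneg {a : ℕ → ℝ} (ha : ∀ k, a k = 0 ∨ a k = 1) (k : ℕ) :
    0 ≤ 2 * a k / 3 ^ (k + 1) := by
  rcases ha k with h | h <;> rw [h] <;> positivity

private lemma digit_le {a : ℕ → ℝ} (ha : ∀ k, a k = 0 ∨ a k = 1) (k : ℕ) :
    2 * a k / 3 ^ (k + 1) ≤ (2/3) * (1/3) ^ k := by
  have h3 : (0:ℝ) < 3 ^ (k+1) := by positivity
  have he : (2:ℝ) * 1 / 3 ^ (k+1) = (2/3) * (1/3) ^ k := by
    rw [pow_succ, one_div, inv_pow]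
    field_simp
  rcases ha k with h | h <;> rw [h]
  · rw [mul_zero, zero_div]; positivity
  · rw [he]

private lemma summable_geo : Summable (fun k : ℕ => (2/3 : ℝ) * (1/3) ^ k) :=
  (summable_geometric_of_lt_one (by norm_num) (by norm_num)).mul_left _

private lemma summable_dig {a : ℕ → ℝ} (ha : ∀ k, a k = 0 ∨ a k = 1) :
    Summable (fun k => 2 * a k / 3 ^ (k + 1)) :=
  Summable.of_nonneg_of_le (digit_nonneg ha) (digit_le ha) summable_geo

private lemma tsum_geo_one : ∑' k : ℕ, (2/3 : ℝ) * (1/3) ^ k = 1 := by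
  rw [tsum_mul_left, tsum_geometric_of_lt_one (by norm_num) (by norm_num)]
  norm_num

private lemma mem_Icc_of_mem {x : ℝ} (hx : x ∈ cantorMiddleThirds) :
    x ∈ Set.Icc (0:ℝ) 1 := by
  obtain ⟨a, ha, rfl⟩ := hx
  refine ⟨tsum_nonneg (digit_nonneg ha), ?_⟩
  calc ∑' k : ℕ, 2 * a k / 3 ^ (k + 1) ≤ ∑' k : ℕ, (2/3 : ℝ) * (1/3) ^ k :=
        Summable.tsum_le_tsum (digit_le ha) (summable_dig ha) summable_geo
    _ = 1 := tsum_geo_one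

private lemma tent_mem_cantor {x : ℝ} (hx : x ∈ cantorMiddleThirds) :
    tent x ∈ cantorMiddleThirds := by
  obtain ⟨a, ha, rfl⟩ := hx
  set y := ∑' k : ℕ, 2 * a (k+1) / 3 ^ (k + 1) with hy
  have hsum : Summable (fun k => 2 * a k / 3 ^ (k + 1)) := summable_dig ha
  have ha' : ∀ k, a (k+1) = 0 ∨ a (k+1) = 1 := fun k => ha (k+1)
  have hsum' : Summable (fun k => 2 * a (k+1) / 3 ^ (k + 1)) := summable_dig ha'
  have hy01 : y ∈ Set.Icc (0:ℝ) 1 := mem_Icc_of_mem ⟨fun k => a (k+1), ha', rfl⟩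
  have hsplit : ∑' k : ℕ, 2 * a k / 3 ^ (k + 1) = 2 * a 0 / 3 + y / 3 := by
    rw [Summable.tsum_eq_zero_add hsum]
    congr 1
    · norm_num
    · rw [hy, ← tsum_div_const]
      apply tsum_congr
      intro k
      rw [pow_succ]
      ring
  rcases ha 0 with h0 | h0
  · have hx3 : ∑' k : ℕ, 2 * a k / 3 ^ (k + 1) = y / 3 := by
      rw [hsplit, h0]; ring
    have hle : y / 3 ≤ 1 / 2 := by linarith [hy01.2]
    have : tent (∑' k : ℕ, 2 * a k / 3 ^ (k + 1)) = y := by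
      rw [hx3, tent, if_pos hle]; ring
    rw [this]
    exact ⟨fun k => a (k+1), ha', rfl⟩
  · have hx3 : ∑' k : ℕ, 2 * a k / 3 ^ (k + 1) = 2/3 + y / 3 := by
      rw [hsplit, h0]; ring
    have hgt : ¬ (2/3 + y / 3 ≤ 1 / 2) := by
      push_neg; linarith [hy01.1]
    have htx : tent (∑' k : ℕ, 2 * a k / 3 ^ (k + 1)) = 1 - y := by
      rw [hx3, tent, if_neg hgt]; ring
    rw [htx]
    refine ⟨fun k => 1 - a (k+1), fun k => by rcases ha' k with h | h <;> simp [h], ?_⟩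
    have h1 : Summable (fun k : ℕ => 2 * (1:ℝ) / 3 ^ (k+1)) :=
      summable_dig (fun _ => Or.inr rfl)
    have hone : (1:ℝ) = ∑' k : ℕ, 2 * (1:ℝ) / 3 ^ (k+1) := by
      rw [show (fun k : ℕ => 2 * (1:ℝ) / 3 ^ (k+1)) = fun k : ℕ => (2/3:ℝ) * (1/3) ^ k
          from funext fun k => by rw [pow_succ, one_div, inv_pow]; field_simp,
        tsum_geo_one]
    rw [hy] at *
    calc 1 - ∑' k : ℕ, 2 * a (k+1) / 3 ^ (k + 1)
        = (∑' k : ℕ, 2 * (1:ℝ) / 3 ^ (k+1)) - ∑' k : ℕ, 2 * a (k+1) / 3 ^ (k + 1) := by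
          rw [← hone]
      _ = ∑' k : ℕ, (2 * (1:ℝ) / 3 ^ (k+1) - 2 * a (k+1) / 3 ^ (k + 1)) := (Summable.tsum_sub h1 hsum').symm
      _ = ∑' k : ℕ, 2 * (1 - a (k+1)) / 3 ^ (k+1) := tsum_congr fun k => by ring

/-- The folded map. -/
noncomputable def gmap (x : ℝ) : ℝ := if x ≤ 1 / 2 then 3 * x else 3 * x - 2

noncomputable def dig (x : ℝ) : ℝ := if x ≤ 1 / 2 then 0 else 1

private lemma decomp (x : ℝ) : x = 2 * dig x / 3 + gmap x / 3 := by
  unfold dig gmap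
  split_ifs <;> ring

private lemma tent_one_sub (x : ℝ) : tent (1 - x) = tent x := by
  unfold tent
  split_ifs with h1 h2 h2 <;> linarith

private lemma gmap_orbit {x : ℝ} (hx : ∀ k : ℕ, tent^[k] x ∈ Set.Icc (0:ℝ) 1) :
    ∀ k : ℕ, tent^[k] (gmap x) ∈ Set.Icc (0:ℝ) 1 := by
  intro k
  unfold gmap
  split_ifs with h
  · have : 3 * x = tent x := by rw [tent, if_pos h]
    rw [this, ← Function.iterate_succ_apply]
    exact hx (k+1)
  · have heq : 3 * x - 2 = 1 - tent x := by rw [tent, if_neg h]; ring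
    rw [heq]
    cases k with
    | zero =>
      simp only [Function.iterate_zero, id]
      have := hx 1
      simp only [Function.iterate_one] at this
      exact ⟨by linarith [this.2], by linarith [this.1]⟩
    | succ n =>
      rw [Function.iterate_succ_apply, tent_one_sub, ← Function.iterate_succ_apply,
        ← Function.iterate_succ_apply]
      exact hx (n+2)

private lemma gmap_iter_orbit {x : ℝ} (hx : ∀ k : ℕ, tent^[k] x ∈ Set.Icc (0:ℝ) 1) :
    ∀ n k : ℕ, tent^[k] (gmap^[n] x) ∈ Set.Icc (0:ℝ) 1 := by
  intro n
  induction n with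
  | zero => simpa using hx
  | succ m ih =>
    intro k
    rw [Function.iterate_succ_apply']
    exact gmap_orbit ih k

private lemma partial_sum_eq {x : ℝ} (n : ℕ) :
    x = (∑ k ∈ Finset.range n, 2 * dig (gmap^[k] x) / 3 ^ (k+1)) + gmap^[n] x / 3 ^ n := by
  induction n with
  | zero => simp
  | succ m ih =>
    rw [Finset.sum_range_succ, Function.iterate_succ_apply']
    have hsplit : gmap^[m] x / 3 ^ m
        = 2 * dig (gmap^[m] x) / 3 ^ (m+1) + gmap (gmap^[m] x) / 3 ^ (m+1) := by
      calc gmap^[m] x / 3 ^ m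
          = (2 * dig (gmap^[m] x) / 3 + gmap (gmap^[m] x) / 3) / 3 ^ m := by
            rw [← decomp]
        _ = 2 * dig (gmap^[m] x) / 3 ^ (m+1) + gmap (gmap^[m] x) / 3 ^ (m+1) := by
            rw [pow_succ]; ring
    linarith [ih, hsplit]

/-- The Cantor set is the set of points all of whose forward iterates under the
tent map remain in `[0,1]`. -/
theorem cantor_eq_tent_invariant :
    cantorMiddleThirds = {x : ℝ | ∀ k : ℕ, tent^[k] x ∈ Set.Icc (0 : ℝ) 1} := by
  ext x
  simp only [Set.mem_setOf_eq]
  constructor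
  · intro hx k
    have : tent^[k] x ∈ cantorMiddleThirds := by
      induction k with
      | zero => simpa using hx
      | succ n ih => rw [Function.iterate_succ_apply']; exact tent_mem_cantor ih
    exact mem_Icc_of_mem this
  · intro hx
    set a : ℕ → ℝ := fun k => dig (gmap^[k] x) with ha_def
    have ha : ∀ k, a k = 0 ∨ a k = 1 := by
      intro k
      have h : a k = dig (gmap^[k] x) := rfl
      rw [h]
      unfold dig
      split_ifs <;> simp
    refine ⟨a, ha, ?_⟩
    have hsum := summable_dig ha
    have htend := hsum.hasSum.tendsto_sum_nat
    have horb := gmap_iter_orbit hx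
    have hrem : Filter.Tendsto (fun n => gmap^[n] x / 3 ^ n) Filter.atTop (nhds 0) := by
      have h1 : Filter.Tendsto (fun n : ℕ => (1/3 : ℝ) ^ n) Filter.atTop (nhds 0) :=
        tendsto_pow_atTop_nhds_zero_of_lt_one (by norm_num) (by norm_num)
      refine squeeze_zero (fun n => ?_) (fun n => ?_) h1
      · have := (horb n 0).1
        simp only [Function.iterate_zero, id] at this
        positivity
      · have h2 := (horb n 0).2
        simp only [Function.iterate_zero, id] at h2
        have h3 : (0:ℝ) < 3 ^ n := by positivity
        have hmul : (1/3:ℝ) ^ n * 3 ^ n = 1 := by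
          rw [← mul_pow]; norm_num
        rw [div_le_iff₀ h3, hmul]
        exact h2
    have hps : Filter.Tendsto (fun n => ∑ k ∈ Finset.range n, 2 * a k / 3 ^ (k+1))
        Filter.atTop (nhds x) := by
      have heq : (fun n => ∑ k ∈ Finset.range n, 2 * a k / 3 ^ (k+1))
          = fun n => x - gmap^[n] x / 3 ^ n := by
        funext n
        have h := partial_sum_eq (x := x) n
        have h2 : ∀ k, a k = dig (gmap^[k] x) := fun _ => rfl
        simp only [h2]
        linarith
      rw [heq]
      have := Filter.Tendsto.sub (tendsto_const_nhds (x := x) (f := Filter.atTop)) hrem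
      simpa using this
    exact tendsto_nhds_unique hps htend
end

section
/- Let 0 ≤ ε < δ/31 with δ ≤ 1/7. Suppose C₁ satisfies (1 + (3/4)δ(1−ε)²)(1−ε)² ≤ C₁ ≤ (1 + (3/4)δ(1+ε)²)(1+ε)². Then (1+ε)/(1−δ/2) < C₁ < ((1−ε)/(1+ε))·(1/(1−δ)). -/
/-!
Write `f t = (1 + (3/4)δ t) t`, so that the hypotheses read `f ((1-ε)²) ≤ C₁ ≤ f ((1+ε)²)`.
Since `f` is increasing on `[0, ∞)`, the squares may be replaced by the linear bounds
`1 - 2ε ≤ (1-ε)²` and `(1+ε)² ≤ 1 + 3ε`, after which both claims are polynomial inequalities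
in `ε` and `δ`. At `ε = 0` they read `(1 + 3δ/4)(1 - δ/2) > 1` and `(1 + 3δ/4)(1 - δ) < 1`,
with slack of order `δ/5` and `δ/4` when `δ ≤ 1/7`; the perturbation by `ε` costs about `3ε`
and `5ε` respectively, which `ε < δ/31` covers.
-/

theorem one_add_mul_self_mul_le {a s t : ℝ} (ha : 0 ≤ a) (hs : 0 ≤ s) (hst : s ≤ t) :
    (1 + a * s) * s ≤ (1 + a * t) * t := by
  gcongr
  exact add_nonneg zero_le_one (mul_nonneg ha (hs.trans hst))

section

variable {ε δ : ℝ}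

theorem one_add_lt_of_lt_div_thirtyOne (hε0 : 0 ≤ ε) (hε : ε < δ / 31) (hδ : δ ≤ 1 / 7) :
    1 + ε < (1 + 3 / 4 * δ * (1 - 2 * ε)) * (1 - 2 * ε) * (1 - δ / 2) := by
  have hδ0 : 0 ≤ δ := by linarith
  nlinarith [mul_nonneg hε0 hδ0, mul_nonneg (mul_nonneg hε0 hε0) hδ0]

theorem lt_one_sub_of_lt_div_thirtyOne (hε0 : 0 ≤ ε) (hε : ε < δ / 31) (hδ : δ ≤ 1 / 7) :
    (1 + 3 / 4 * δ * (1 + 3 * ε)) * (1 + 3 * ε) * ((1 + ε) * (1 - δ)) < 1 - ε := by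
  have hδ0 : 0 ≤ δ := by linarith
  nlinarith [mul_nonneg hε0 hδ0, mul_nonneg (mul_nonneg hε0 hε0) hδ0]

end

/-- Bounds on `C₁`, the weakly computed value of `1 + (3/4)δ`. -/
theorem C1_bounds (ε δ C₁ : ℝ) (hε0 : 0 ≤ ε) (hε : ε < δ / 31) (hδ : δ ≤ 1 / 7)
    (hlo : (1 + (3 / 4) * δ * (1 - ε) ^ 2) * (1 - ε) ^ 2 ≤ C₁)
    (hhi : C₁ ≤ (1 + (3 / 4) * δ * (1 + ε) ^ 2) * (1 + ε) ^ 2) :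
    (1 + ε) / (1 - δ / 2) < C₁ ∧ C₁ < ((1 - ε) / (1 + ε)) * (1 / (1 - δ)) := by
  have hδ0 : 0 ≤ δ := by linarith
  have hε1 : ε ≤ 1 / 217 := by linarith
  have ha : 0 ≤ 3 / 4 * δ := by positivity
  have hlin_lo : 1 - 2 * ε ≤ (1 - ε) ^ 2 := by nlinarith [sq_nonneg ε]
  have hlin_hi : (1 + ε) ^ 2 ≤ 1 + 3 * ε := by nlinarith
  have hpos_lo : 0 < 1 - δ / 2 := by linarith
  have hpos_hi : 0 < (1 + ε) * (1 - δ) := mul_pos (by linarith) (by linarith)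
  constructor
  · rw [div_lt_iff₀ hpos_lo]
    calc 1 + ε < (1 + 3 / 4 * δ * (1 - 2 * ε)) * (1 - 2 * ε) * (1 - δ / 2) :=
          one_add_lt_of_lt_div_thirtyOne hε0 hε hδ
      _ ≤ (1 + 3 / 4 * δ * (1 - ε) ^ 2) * (1 - ε) ^ 2 * (1 - δ / 2) :=
          mul_le_mul_of_nonneg_right (one_add_mul_self_mul_le ha (by linarith) hlin_lo) hpos_lo.le
      _ ≤ C₁ * (1 - δ / 2) := mul_le_mul_of_nonneg_right hlo hpos_lo.le
  · rw [div_mul_div_comm, mul_one, lt_div_iff₀ hpos_hi]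
    calc C₁ * ((1 + ε) * (1 - δ))
        ≤ (1 + 3 / 4 * δ * (1 + ε) ^ 2) * (1 + ε) ^ 2 * ((1 + ε) * (1 - δ)) :=
          mul_le_mul_of_nonneg_right hhi hpos_hi.le
      _ ≤ (1 + 3 / 4 * δ * (1 + 3 * ε)) * (1 + 3 * ε) * ((1 + ε) * (1 - δ)) :=
          mul_le_mul_of_nonneg_right (one_add_mul_self_mul_le ha (sq_nonneg _) hlin_hi) hpos_hi.le
      _ < 1 - ε := lt_one_sub_of_lt_div_thirtyOne hε0 hε hδ
end

section
/- Suppose a, b, c ∈ F_ε are strictly positive, b ≥ c, and b < a/2 (radix 2). Then d := fl_ε(a − b) satisfies d ≥ a/2, and consequently e := fl_ε(d − c) > 0 and a − b − c > 0. -/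
theorem div_two_pow_mem {K : Type*} [Field K] {S : Set K} (hhalf : ∀ u ∈ S, u / 2 ∈ S)
    {c : K} (hc : c ∈ S) (n : ℕ) : c / 2 ^ n ∈ S := by
  induction n with
  | zero => simpa using hc
  | succ n ih => simpa [pow_succ, div_div] using hhalf _ ih

theorem exists_div_two_pow_lt {K : Type*} [Field K] [LinearOrder K] [IsStrictOrderedRing K]
    [Archimedean K] (c : K) {x : K} (hx : 0 < x) : ∃ n : ℕ, c / 2 ^ n < x := by
  obtain ⟨n, hn⟩ := pow_unbounded_of_one_lt (c / x) one_lt_two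
  exact ⟨n, (div_lt_comm₀ (by positivity) hx).2 hn⟩

theorem le_apply_of_mem_of_le {α : Type*} [Preorder α] {fl : α → α} {S : Set α}
    (hmono : Monotone fl) (hfix : ∀ u ∈ S, fl u = u) {y x : α} (hy : y ∈ S) (hyx : y ≤ x) :
    y ≤ fl x :=
  hfix y hy ▸ hmono hyx

theorem apply_pos_of_pos {K : Type*} [Field K] [LinearOrder K] [IsStrictOrderedRing K]
    [Archimedean K] {fl : K → K} {S : Set K} (hmono : Monotone fl)
    (hfix : ∀ u ∈ S, fl u = u) (hhalf : ∀ u ∈ S, u / 2 ∈ S) {c : K} (hc : c ∈ S) (hc0 : 0 < c)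
    {x : K} (hx : 0 < x) : 0 < fl x := by
  obtain ⟨n, hn⟩ := exists_div_two_pow_lt c hx
  calc 0 < c / 2 ^ n := by positivity
    _ ≤ fl x := le_apply_of_mem_of_le hmono hfix (div_two_pow_mem hhalf hc n) hn.le

theorem sign_correct_case3_general (t : ℕ) (fl : ℝ → ℝ)
    (hmono : ∀ u v : ℝ, u ≤ v → fl u ≤ fl v)
    (hfix : ∀ u ∈ Fset 2 t, fl u = u)
    (hhalf : ∀ u ∈ Fset 2 t, u / 2 ∈ Fset 2 t)
    (a b c d e : ℝ) (ha : a ∈ Fset 2 t) (hc : c ∈ Fset 2 t)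
    (hc0 : 0 < c) (hbc : c ≤ b) (hba : b < a / 2)
    (hd : d = fl (a - b)) (he : e = fl (d - c)) :
    a / 2 ≤ d ∧ 0 < e ∧ 0 < a - b - c := by
  have hfl : Monotone fl := fun u v => hmono u v
  have hd2 : a / 2 ≤ d := hd ▸ le_apply_of_mem_of_le hfl hfix (hhalf a ha) (by linarith)
  have he0 : 0 < e := he ▸ apply_pos_of_pos hfl hfix hhalf hc hc0 (by linarith)
  exact ⟨hd2, he0, by linarith⟩

/-- Case 3 of the sign-correct comparison lemma: if `a, b, c` are strictly
positive radix-2 floats with `b ≥ c` and `b < a/2`, then `d = fl(a−b) ≥ a/2`,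
`e = fl(d−c) > 0`, and `a − b − c > 0`. -/
theorem sign_correct_case3 (t : ℕ) (fl : ℝ → ℝ)
    (hmem : ∀ z, fl z ∈ Fset 2 t)
    (hnear : ∀ z, ∀ y ∈ Fset 2 t, |fl z - z| ≤ |y - z|)
    (hmono : ∀ u v : ℝ, u ≤ v → fl u ≤ fl v)
    (hfix : ∀ u ∈ Fset 2 t, fl u = u)
    (hhalf : ∀ u ∈ Fset 2 t, u / 2 ∈ Fset 2 t)
    (a b c d e : ℝ) (ha : a ∈ Fset 2 t) (hb : b ∈ Fset 2 t) (hc : c ∈ Fset 2 t)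
    (ha0 : 0 < a) (hb0 : 0 < b) (hc0 : 0 < c) (hbc : c ≤ b) (hba : b < a / 2)
    (hd : d = fl (a - b)) (he : e = fl (d - c)) :
    a / 2 ≤ d ∧ 0 < e ∧ 0 < a - b - c :=
  sign_correct_case3_general t fl hmono hfix hhalf a b c d e ha hc hc0 hbc hba hd he
end
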